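/- arXiv:1710.01374 — 2 statements merged into one kernel-verified Lean document; each statement's English description precedes it below -/
import Mathlib

section
/- Let χ : [n] → {•, ∘} with χ^{-1}(∘) = {1 = l0 < l1 < ... < lm = n}, and σ ≤ π in INC(χ) with π = {V1,...,Vt}. Then μ_INC(σ, π) = Π_{s=1}^{t} Π_{i=1}^{m} μ_NC(σ_i|_{Vs ∩ [l_{i-1}, l_i]}, 1_{Vs ∩ [l_{i-1}, l_i]}), where σ_i is the restriction of σ to [l_{i-1}, l_i], μ_NC is the Möbius function of the noncrossing partition lattice of the relevant finite ordered set, and μ over the empty set is 1. -/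
open scoped Classical

section Defs

variable {α : Type*}

/-- `P` is a partition of the finite set `S`: blocks are nonempty subsets of `S`
and every element of `S` lies in a unique block. -/
def IsPartitionOn (S : Finset α) (P : Finset (Finset α)) : Prop :=
  (∀ B ∈ P, B.Nonempty ∧ B ⊆ S) ∧ ∀ x ∈ S, ∃! B, B ∈ P ∧ x ∈ B

/-- `P` is noncrossing: no `s₁ < r₁ < s₂ < r₂` with `s₁, s₂` in one block and
`r₁, r₂` in a different block. -/
def Noncrossing [LinearOrder α] (P : Finset (Finset α)) : Prop :=
  ∀ V ∈ P, ∀ W ∈ P, V ≠ W →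
    ¬ ∃ s₁ r₁ s₂ r₂, s₁ ∈ V ∧ s₂ ∈ V ∧ r₁ ∈ W ∧ r₂ ∈ W ∧ s₁ < r₁ ∧ r₁ < s₂ ∧ s₂ < r₂

/-- A block `V` is inner if some other block `W` has elements `s, t` with
`s < v < t` for all `v ∈ V`. -/
def IsInnerBlock [LinearOrder α] (P : Finset (Finset α)) (V : Finset α) : Prop :=
  ∃ W ∈ P, W ≠ V ∧ ∃ s ∈ W, ∃ t ∈ W, ∀ v ∈ V, s < v ∧ v < t

/-- `P` is an interval partition: no `s₁ < r < s₂` with `s₁, s₂` in one block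
and `r` in a different block. -/
def IsIntervalPartition [LinearOrder α] (P : Finset (Finset α)) : Prop :=
  ∀ V ∈ P, ∀ W ∈ P, V ≠ W →
    ¬ ∃ s₁ r s₂, s₁ ∈ V ∧ s₂ ∈ V ∧ r ∈ W ∧ s₁ < r ∧ r < s₂

/-- Reversed refinement order: every block of `P` is contained in a block of `Q`. -/
def Refines (P Q : Finset (Finset α)) : Prop := ∀ B ∈ P, ∃ C ∈ Q, B ⊆ C

/-- Noncrossing partition of the finite ordered set `S`. -/
def NCOn [LinearOrder α] (S : Finset α) (P : Finset (Finset α)) : Prop :=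
  IsPartitionOn S P ∧ Noncrossing P

/-- Interval-noncrossing partition of `S` w.r.t. the coloring `χ`
(`χ k = true` means `k` is colored `∘`): a noncrossing partition such that
no `∘`-colored element lies in an inner block. -/
def INCOn [LinearOrder α] (S : Finset α) (χ : α → Bool) (P : Finset (Finset α)) : Prop :=
  IsPartitionOn S P ∧ Noncrossing P ∧
    ∀ V ∈ P, IsInnerBlock P V → ∀ k ∈ V, χ k = false

/-- Restriction of a partition to a subset: nonempty intersections of blocks with `A`. -/
def restrictPart [DecidableEq α] (P : Finset (Finset α)) (A : Finset α) : Finset (Finset α) :=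
  (P.image (· ∩ A)).filter (·.Nonempty)

end Defs

section Mobius

/-- `μ` is the Möbius function of the finite poset given by the relation `le`
restricted to the finite set `S`: it is a two-sided convolution inverse of
the zeta function. -/
def IsMobiusOn {β : Type*} (S : Finset β) (le : β → β → Prop) (μ : β → β → ℂ) : Prop :=
  ∀ a ∈ S, ∀ b ∈ S, le a b →
    ((∑ c ∈ S.filter (fun c => le a c ∧ le c b), μ a c) = if a = b then 1 else 0) ∧
    ((∑ c ∈ S.filter (fun c => le a c ∧ le c b), μ c b) = if a = b then 1 else 0)

/-- The finite set of interval-noncrossing partitions of `S ⊆ [n]` w.r.t. `χ`. -/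
noncomputable def INCset {n : ℕ} (S : Finset (Fin n)) (χ : Fin n → Bool) :
    Finset (Finset (Finset (Fin n))) :=
  Finset.univ.filter (fun Q => INCOn S χ Q)

/-- The finite set of noncrossing partitions of `S ⊆ [n]`. -/
noncomputable def NCset {n : ℕ} (S : Finset (Fin n)) :
    Finset (Finset (Finset (Fin n))) :=
  Finset.univ.filter (fun Q => NCOn S Q)

end Mobius


/-!
A block of an interval-noncrossing partition that passes over a `∘`-point contains it, since
otherwise the block of that point would be inner. Hence restriction to the intervals
`[l (i - 1), l i]` identifies `INC(χ)`, as a poset, with the product of the lattices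
`NC([l (i - 1), l i])`, the inverse map gluing the pieces at the points `l i`. Likewise the
noncrossing partitions of `A` below `π` form the product of the lattices `NC(V)`, `V ∈ π`.
Along such a product decomposition the product of left inverses of the zeta functions is a left
inverse of the zeta function, and a left inverse of zeta is the Möbius function. So
`μ_INC(σ, π) = ∏ᵢ μ_NC(σ|[l (i - 1), l i], π|[l (i - 1), l i])` and
`μ_NC(τ, π) = ∏_{V ∈ π} μ_NC(τ|V, 1_V)`, which combine to the formula.
-/

open Finset

section LeftMobius

variable {β β₁ β₂ : Type*} {S : Finset β} {le : β → β → Prop}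

def IsLeftMobiusOn (S : Finset β) (le : β → β → Prop) (F : β → β → ℂ) : Prop :=
  ∀ a ∈ S, ∀ b ∈ S, le a b →
    (∑ c ∈ S.filter (fun c => le a c ∧ le c b), F a c) = if a = b then 1 else 0

theorem IsMobiusOn.isLeftMobiusOn {μ : β → β → ℂ}
    (hμ : IsMobiusOn S le μ) : IsLeftMobiusOn S le μ :=
  fun a ha b hb hab => (hμ a ha b hb hab).1

theorem IsLeftMobiusOn.congr {F G : β → β → ℂ}
    (hF : IsLeftMobiusOn S le F) (h : ∀ a ∈ S, ∀ b ∈ S, F a b = G a b) :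
    IsLeftMobiusOn S le G := by
  intro a ha b hb hab
  rw [← hF a ha b hb hab]
  exact sum_congr rfl fun c hc => (h a ha c (mem_filter.1 hc).1).symm

theorem isLeftMobiusOn_singleton {F : β → β → ℂ} {a : β}
    (hle : le a a) (hF : F a a = 1) : IsLeftMobiusOn {a} le F := by
  rintro _ h _ h' -
  rw [mem_singleton] at h h'
  subst h h'
  rw [filter_singleton, if_pos ⟨hle, hle⟩, sum_singleton, hF, if_pos rfl]

/-- `F = F * (ζ * μ) = (F * ζ) * μ = μ` in the incidence algebra. -/
theorem IsLeftMobiusOn.eq_of_isMobiusOn {F μ : β → β → ℂ}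
    (hF : IsLeftMobiusOn S le F) (hμ : IsMobiusOn S le μ)
    (hrefl : ∀ a ∈ S, le a a) (htrans : ∀ a b c, le a b → le b c → le a c)
    {a b : β} (ha : a ∈ S) (hb : b ∈ S) (hab : le a b) : F a b = μ a b := by
  set I : β → β → Finset β := fun x y => S.filter (fun c => le x c ∧ le c y)
  have hmem : ∀ {x y c}, c ∈ I x y ↔ c ∈ S ∧ le x c ∧ le c y := mem_filter
  calc F a b = ∑ c ∈ I a b, F a c * ∑ d ∈ I c b, μ d b := by
        rw [sum_congr rfl fun c hc => by
          rw [(hμ c (hmem.1 hc).1 b hb (hmem.1 hc).2.2).2]]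
        simp_rw [mul_ite, mul_one, mul_zero]
        rw [sum_ite_eq', if_pos (hmem.2 ⟨hb, hab, hrefl b hb⟩)]
    _ = ∑ d ∈ I a b, (∑ c ∈ I a d, F a c) * μ d b := by
        simp_rw [mul_sum, sum_mul]
        refine sum_comm' fun c d => ?_
        simp only [hmem]
        constructor
        · rintro ⟨⟨hc, hac, hcb⟩, hd, hcd, hdb⟩
          exact ⟨⟨hc, hac, hcd⟩, hd, htrans _ _ _ hac hcd, hdb⟩
        · rintro ⟨⟨hc, hac, hcd⟩, hd, had, hdb⟩
          exact ⟨⟨hc, hac, htrans _ _ _ hcd hdb⟩, hd, hcd, hdb⟩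
    _ = μ a b := by
        rw [sum_congr rfl fun d hd => by
          rw [hF a ha d (hmem.1 hd).1 (hmem.1 hd).2.1]]
        simp_rw [ite_mul, one_mul, zero_mul]
        rw [sum_ite_eq, if_pos (hmem.2 ⟨ha, hrefl a ha, hab⟩)]

theorem IsMobiusOn.filter_le {μ : β → β → ℂ}
    (hμ : IsMobiusOn S le μ) (htrans : ∀ a b c, le a b → le b c → le a c) (t : β) :
    IsMobiusOn (S.filter (le · t)) le μ := by
  intro a ha b hb hab
  have hI : (S.filter (le · t)).filter (fun c => le a c ∧ le c b) =
      S.filter (fun c => le a c ∧ le c b) := by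
    ext c
    simp only [mem_filter]
    exact ⟨fun h => ⟨h.1.1, h.2⟩, fun h => ⟨⟨h.1, htrans _ _ _ h.2.2 (mem_filter.1 hb).2⟩, h.2⟩⟩
  rw [hI]
  exact hμ a (mem_filter.1 ha).1 b (mem_filter.1 hb).1 hab

theorem IsLeftMobiusOn.prod {S₁ : Finset β₁} {le₁ : β₁ → β₁ → Prop} {F₁ : β₁ → β₁ → ℂ}
    {S₂ : Finset β₂} {le₂ : β₂ → β₂ → Prop} {F₂ : β₂ → β₂ → ℂ}
    (h₁ : IsLeftMobiusOn S₁ le₁ F₁) (h₂ : IsLeftMobiusOn S₂ le₂ F₂)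
    (r : β → β₁ × β₂) (hr : Set.BijOn r S (S₁ ×ˢ S₂))
    (hle : ∀ a ∈ S, ∀ b ∈ S, le a b ↔ le₁ (r a).1 (r b).1 ∧ le₂ (r a).2 (r b).2) :
    IsLeftMobiusOn S le (fun a b => F₁ (r a).1 (r b).1 * F₂ (r a).2 (r b).2) := by
  intro a ha b hb hab
  have hrS : ∀ {c}, c ∈ S → (r c).1 ∈ S₁ ∧ (r c).2 ∈ S₂ := fun hc => hr.mapsTo hc
  obtain ⟨hab₁, hab₂⟩ := (hle a ha b hb).1 hab
  have hsum : (∑ c ∈ S.filter (fun c => le a c ∧ le c b), F₁ (r a).1 (r c).1 * F₂ (r a).2 (r c).2)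
      = ∑ x ∈ S₁.filter (fun x => le₁ (r a).1 x ∧ le₁ x (r b).1) ×ˢ
          S₂.filter (fun y => le₂ (r a).2 y ∧ le₂ y (r b).2), F₁ (r a).1 x.1 * F₂ (r a).2 x.2 := by
    refine sum_nbij r (fun c hc => ?_) (hr.injOn.mono fun c hc => (mem_filter.1 hc).1)
      (fun x hx => ?_) (fun _ _ => rfl)
    · obtain ⟨hc, hac, hcb⟩ := mem_filter.1 hc
      rw [hle a ha c hc] at hac
      rw [hle c hc b hb] at hcb
      exact mem_product.2 ⟨mem_filter.2 ⟨(hrS hc).1, hac.1, hcb.1⟩,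
        mem_filter.2 ⟨(hrS hc).2, hac.2, hcb.2⟩⟩
    · obtain ⟨hx₁, hx₂⟩ := mem_product.1 (mem_coe.1 hx)
      obtain ⟨hx₁, hax₁, hxb₁⟩ := mem_filter.1 hx₁
      obtain ⟨hx₂, hax₂, hxb₂⟩ := mem_filter.1 hx₂
      obtain ⟨c, hc, rfl⟩ := hr.surjOn (show x ∈ (S₁ ×ˢ S₂ : Set _) from ⟨hx₁, hx₂⟩)
      exact ⟨c, mem_filter.2 ⟨hc, (hle a ha c hc).2 ⟨hax₁, hax₂⟩, (hle c hc b hb).2 ⟨hxb₁, hxb₂⟩⟩,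
        rfl⟩
  have hreq : (r a = r b) ↔ a = b := ⟨fun h => hr.injOn ha hb h, congrArg r⟩
  rw [hsum, sum_product, ← sum_mul_sum, h₁ _ (hrS ha).1 _ (hrS hb).1 hab₁,
    h₂ _ (hrS ha).2 _ (hrS hb).2 hab₂, ← hreq, Prod.ext_iff, ite_zero_mul_ite_zero, one_mul]
  congr 1

end LeftMobius

section Partitions

variable {α : Type*} {S T A X Y : Finset α} {P Q : Finset (Finset α)} {B C : Finset α} {x p : α}
  {c d e : Finset (Finset α)}

namespace IsPartitionOn

theorem nonempty (hP : IsPartitionOn S P) (hB : B ∈ P) : B.Nonempty := (hP.1 B hB).1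

theorem subset (hP : IsPartitionOn S P) (hB : B ∈ P) : B ⊆ S := (hP.1 B hB).2

theorem eq_of_mem (hP : IsPartitionOn S P) (hB : B ∈ P) (hC : C ∈ P) (hxB : x ∈ B)
    (hxC : x ∈ C) : B = C := by
  obtain ⟨D, _, hD⟩ := hP.2 x (hP.subset hB hxB)
  rw [hD B ⟨hB, hxB⟩, hD C ⟨hC, hxC⟩]

theorem exists_mem (hP : IsPartitionOn S P) (hx : x ∈ S) : ∃ B ∈ P, x ∈ B :=
  (hP.2 x hx).exists.imp fun _ h => h

theorem disjoint (hP : IsPartitionOn S P) (hB : B ∈ P) (hC : C ∈ P) (hBC : B ≠ C) :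
    Disjoint B C :=
  disjoint_left.2 fun _ hxB hxC => hBC (hP.eq_of_mem hB hC hxB hxC)

theorem eq_empty (hP : IsPartitionOn ∅ P) : P = ∅ :=
  eq_empty_of_forall_notMem fun _ hB =>
    (hP.nonempty hB).ne_empty (subset_empty.1 (hP.subset hB))

theorem eq_singleton {a : α} (hP : IsPartitionOn {a} P) : P = {{a}} := by
  have hB : ∀ B ∈ P, B = {a} := fun B hB =>
    (Nonempty.subset_singleton_iff (hP.nonempty hB)).1 (hP.subset hB)
  obtain ⟨B, hBP, -⟩ := hP.exists_mem (mem_singleton_self a)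
  rw [← hB B hBP]
  exact eq_singleton_iff_unique_mem.2 ⟨hBP, fun C hC => (hB C hC).trans (hB B hBP).symm⟩

theorem singleton (hA : A.Nonempty) : IsPartitionOn A {A} :=
  ⟨fun _ hB => by rw [mem_singleton.1 hB]; exact ⟨hA, subset_rfl⟩,
    fun _ hx => ⟨A, ⟨mem_singleton_self A, hx⟩, fun _ hC => mem_singleton.1 hC.1⟩⟩

theorem union [DecidableEq α] (hP : IsPartitionOn X P) (hQ : IsPartitionOn Y Q)
    (hXY : Disjoint X Y) : IsPartitionOn (X ∪ Y) (P ∪ Q) := by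
  refine ⟨fun B hB => ?_, fun x hx => ?_⟩
  · rcases mem_union.1 hB with hB | hB
    · exact ⟨hP.nonempty hB, (hP.subset hB).trans subset_union_left⟩
    · exact ⟨hQ.nonempty hB, (hQ.subset hB).trans subset_union_right⟩
  · have hPQ : ∀ B ∈ P, ∀ C ∈ Q, x ∈ B → x ∉ C := fun B hB C hC hxB hxC =>
      disjoint_left.1 hXY (hP.subset hB hxB) (hQ.subset hC hxC)
    rcases mem_union.1 hx with hx | hx
    · obtain ⟨B, hB, hxB⟩ := hP.exists_mem hx
      refine ⟨B, ⟨mem_union_left _ hB, hxB⟩, fun C ⟨hC, hxC⟩ => ?_⟩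
      rcases mem_union.1 hC with hC | hC
      · exact hP.eq_of_mem hC hB hxC hxB
      · exact absurd hxC (hPQ B hB C hC hxB)
    · obtain ⟨B, hB, hxB⟩ := hQ.exists_mem hx
      refine ⟨B, ⟨mem_union_right _ hB, hxB⟩, fun C ⟨hC, hxC⟩ => ?_⟩
      rcases mem_union.1 hC with hC | hC
      · exact absurd hxB (hPQ C hC B hB hxC)
      · exact hQ.eq_of_mem hC hB hxC hxB

theorem erase [DecidableEq α] (hP : IsPartitionOn S P) (hB : B ∈ P) :
    IsPartitionOn (S \ B) (P.erase B) := by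
  refine ⟨fun C hC => ?_, fun x hx => ?_⟩
  · obtain ⟨hCB, hC⟩ := mem_erase.1 hC
    exact ⟨hP.nonempty hC, subset_sdiff.2 ⟨hP.subset hC, hP.disjoint hC hB hCB⟩⟩
  · obtain ⟨hxS, hxB⟩ := mem_sdiff.1 hx
    obtain ⟨C, hC, hxC⟩ := hP.exists_mem hxS
    exact ⟨C, ⟨mem_erase.2 ⟨fun h => hxB (h ▸ hxC), hC⟩, hxC⟩,
      fun D hD => hP.eq_of_mem (mem_of_mem_erase hD.1) hC hD.2 hxC⟩

end IsPartitionOn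

namespace Refines

theorem refl (P : Finset (Finset α)) : Refines P P := fun B hB => ⟨B, hB, subset_rfl⟩

theorem trans (h₁ : Refines P Q) {R : Finset (Finset α)} (h₂ : Refines Q R) : Refines P R :=
  fun B hB =>
    let ⟨_, hC, hBC⟩ := h₁ B hB
    let ⟨D, hD, hCD⟩ := h₂ _ hC
    ⟨D, hD, hBC.trans hCD⟩

theorem antisymm (hP : IsPartitionOn S P) (hQ : IsPartitionOn S Q) (h₁ : Refines P Q)
    (h₂ : Refines Q P) : P = Q := by
  have key : ∀ {P Q : Finset (Finset α)}, IsPartitionOn S P → Refines P Q → Refines Q P →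
      P ⊆ Q := by
    intro P Q hP h₁ h₂ B hB
    obtain ⟨C, hC, hBC⟩ := h₁ B hB
    obtain ⟨B', hB', hCB'⟩ := h₂ C hC
    obtain ⟨x, hx⟩ := hP.nonempty hB
    obtain rfl := hP.eq_of_mem hB hB' hx (hCB' (hBC hx))
    rwa [hBC.antisymm hCB']
  exact (key hP h₁ h₂).antisymm (key hQ h₂ h₁)

theorem subset_right (h : Refines P Q) {R : Finset (Finset α)} (hQR : Q ⊆ R) : Refines P R :=
  fun B hB => (h B hB).imp fun _ hC => ⟨hQR hC.1, hC.2⟩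

theorem union [DecidableEq α] {R : Finset (Finset α)} (hP : Refines P R) (hQ : Refines Q R) :
    Refines (P ∪ Q) R := fun B hB => (mem_union.1 hB).elim (hP B) (hQ B)

theorem subset_or_disjoint (h : Refines Q P) (hP : IsPartitionOn S P) (hB : B ∈ P) (hC : C ∈ Q) :
    C ⊆ B ∨ Disjoint C B := by
  obtain ⟨V, hV, hCV⟩ := h C hC
  obtain rfl | hVB := eq_or_ne V B
  · exact Or.inl hCV
  · exact Or.inr (disjoint_of_subset_left hCV (hP.disjoint hV hB hVB))

end Refines

section restrictPart

variable [DecidableEq α]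

theorem mem_restrictPart :
    C ∈ restrictPart P A ↔ (∃ B ∈ P, B ∩ A = C) ∧ C.Nonempty := by
  simp [restrictPart]

theorem inter_mem_restrictPart (hB : B ∈ P) (h : (B ∩ A).Nonempty) :
    B ∩ A ∈ restrictPart P A :=
  mem_restrictPart.2 ⟨⟨B, hB, rfl⟩, h⟩

theorem mem_restrictPart_of_subset (hB : B ∈ P) (hBA : B ⊆ A) (hne : B.Nonempty) :
    B ∈ restrictPart P A := by
  rw [← inter_eq_left.2 hBA] at hne ⊢
  exact inter_mem_restrictPart hB hne

theorem IsPartitionOn.restrict (hP : IsPartitionOn S P) (hA : A ⊆ S) :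
    IsPartitionOn A (restrictPart P A) := by
  refine ⟨fun C hC => ?_, fun x hx => ?_⟩
  · obtain ⟨⟨B, -, rfl⟩, hne⟩ := mem_restrictPart.1 hC
    exact ⟨hne, inter_subset_right⟩
  · obtain ⟨B, hB, hxB⟩ := hP.exists_mem (hA hx)
    refine ⟨B ∩ A, ⟨inter_mem_restrictPart hB ⟨x, mem_inter.2 ⟨hxB, hx⟩⟩,
      mem_inter.2 ⟨hxB, hx⟩⟩, fun C ⟨hC, hxC⟩ => ?_⟩
    obtain ⟨⟨B', hB', rfl⟩, -⟩ := mem_restrictPart.1 hC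
    rw [hP.eq_of_mem hB' hB (mem_inter.1 hxC).1 hxB]

theorem Refines.restrict (h : Refines P Q) (A : Finset α) :
    Refines (restrictPart P A) (restrictPart Q A) := by
  intro C hC
  obtain ⟨⟨B, hB, rfl⟩, hne⟩ := mem_restrictPart.1 hC
  obtain ⟨B', hB', hBB'⟩ := h B hB
  have hsub : B ∩ A ⊆ B' ∩ A := inter_subset_inter hBB' subset_rfl
  exact ⟨B' ∩ A, inter_mem_restrictPart hB' (hne.mono hsub), hsub⟩

theorem restrictPart_restrictPart (hAT : A ⊆ T) :
    restrictPart (restrictPart P T) A = restrictPart P A := by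
  ext C
  simp only [mem_restrictPart]
  constructor
  · rintro ⟨⟨_, ⟨⟨B, hB, rfl⟩, -⟩, rfl⟩, hne⟩
    exact ⟨⟨B, hB, by rw [inter_assoc, inter_eq_right.2 hAT]⟩, hne⟩
  · rintro ⟨⟨B, hB, rfl⟩, hne⟩
    refine ⟨⟨B ∩ T, ⟨⟨B, hB, rfl⟩, hne.mono (inter_subset_inter subset_rfl hAT)⟩, ?_⟩, hne⟩
    rw [inter_assoc, inter_eq_right.2 hAT]

theorem IsPartitionOn.restrictPart_of_subset (hP : IsPartitionOn S P) (hST : S ⊆ T) :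
    restrictPart P T = P := by
  ext C
  rw [mem_restrictPart]
  constructor
  · rintro ⟨⟨B, hB, rfl⟩, -⟩
    rwa [inter_eq_left.2 ((hP.subset hB).trans hST)]
  · exact fun hC => ⟨⟨C, hC, inter_eq_left.2 ((hP.subset hC).trans hST)⟩, hP.nonempty hC⟩

theorem IsPartitionOn.restrictPart_of_disjoint (hP : IsPartitionOn S P) (hST : Disjoint S T) :
    restrictPart P T = ∅ := by
  refine eq_empty_of_forall_notMem fun C hC => ?_
  obtain ⟨⟨B, hB, rfl⟩, hne⟩ := mem_restrictPart.1 hC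
  exact hne.ne_empty (disjoint_iff_inter_eq_empty.1 (disjoint_of_subset_left (hP.subset hB) hST))

theorem restrictPart_union (P Q : Finset (Finset α)) (A : Finset α) :
    restrictPart (P ∪ Q) A = restrictPart P A ∪ restrictPart Q A := by
  simp only [restrictPart, image_union, filter_union]

theorem restrictPart_singleton (h : (B ∩ A).Nonempty) : restrictPart {B} A = {B ∩ A} := by
  simp [restrictPart, h]

theorem Refines.exists_superset_inter (h : Refines (restrictPart P T) (restrictPart Q T))
    (hB : B ∈ P) (hne : (B ∩ T).Nonempty) : ∃ C ∈ Q, B ∩ T ⊆ C := by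
  obtain ⟨C', hC', hsub⟩ := h _ (inter_mem_restrictPart hB hne)
  obtain ⟨⟨C, hC, rfl⟩, -⟩ := mem_restrictPart.1 hC'
  exact ⟨C, hC, hsub.trans inter_subset_left⟩

theorem IsPartitionOn.restrictPart_of_mem (hP : IsPartitionOn S P) (hB : B ∈ P) :
    restrictPart P B = {B} := by
  ext C
  rw [mem_restrictPart, mem_singleton]
  constructor
  · rintro ⟨⟨B', hB', rfl⟩, x, hx⟩
    obtain ⟨hxB', hxB⟩ := mem_inter.1 hx
    rw [hP.eq_of_mem hB' hB hxB' hxB, inter_self]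
  · rintro rfl
    exact ⟨⟨C, hB, inter_self C⟩, hP.nonempty hB⟩

theorem restrictPart_empty (P : Finset (Finset α)) : restrictPart P ∅ = ∅ := by
  simp [restrictPart]

theorem IsPartitionOn.restrictPart_eq_filter (hP : IsPartitionOn S P)
    (h : ∀ B ∈ P, B ⊆ T ∨ Disjoint B T) : restrictPart P T = P.filter (· ⊆ T) := by
  ext C
  rw [mem_restrictPart, mem_filter]
  constructor
  · rintro ⟨⟨B, hB, rfl⟩, hne⟩
    have hBT : B ⊆ T :=
      (h B hB).resolve_right fun hd => hne.ne_empty (disjoint_iff_inter_eq_empty.1 hd)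
    rw [inter_eq_left.2 hBT]
    exact ⟨hB, hBT⟩
  · rintro ⟨hC, hCT⟩
    exact ⟨⟨C, hC, inter_eq_left.2 hCT⟩, hP.nonempty hC⟩

theorem IsPartitionOn.restrictPart_union_restrictPart_sdiff (hP : IsPartitionOn S P)
    (h : ∀ B ∈ P, B ⊆ T ∨ Disjoint B T) :
    restrictPart P T ∪ restrictPart P (S \ T) = P := by
  have h' : ∀ B ∈ P, B ⊆ S \ T ∨ Disjoint B (S \ T) := fun B hB =>
    (h B hB).symm.imp (fun hd => subset_sdiff.2 ⟨hP.subset hB, hd⟩)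
      fun hBT => disjoint_of_subset_left hBT disjoint_sdiff
  rw [hP.restrictPart_eq_filter h, hP.restrictPart_eq_filter h', ← filter_or]
  refine filter_true_of_mem fun B hB => (h B hB).imp id fun hd => subset_sdiff.2 ⟨hP.subset hB, hd⟩

theorem IsPartitionOn.restrictPart_union_left (hP : IsPartitionOn X P)
    (hQ : IsPartitionOn Y Q) (hXY : Disjoint X Y) : restrictPart (P ∪ Q) X = P := by
  ext C
  rw [mem_restrictPart]
  constructor
  · rintro ⟨⟨B, hB, rfl⟩, hne⟩
    rcases mem_union.1 hB with hB | hB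
    · rwa [inter_eq_left.2 (hP.subset hB)]
    · exact absurd (disjoint_iff_inter_eq_empty.1
        (disjoint_of_subset_left (hQ.subset hB) hXY.symm)) hne.ne_empty
  · exact fun hC => ⟨⟨C, mem_union_left _ hC, inter_eq_left.2 (hP.subset hC)⟩, hP.nonempty hC⟩

theorem IsPartitionOn.restrictPart_sdiff_of_mem (hP : IsPartitionOn S P) (hB : B ∈ P) :
    restrictPart P (S \ B) = P.erase B := by
  ext C
  rw [mem_restrictPart, mem_erase]
  constructor
  · rintro ⟨⟨C', hC', rfl⟩, x, hx⟩
    obtain ⟨hxC', hxSB⟩ := mem_inter.1 hx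
    have hne : C' ≠ B := fun h => (mem_sdiff.1 hxSB).2 (h ▸ hxC')
    rw [inter_eq_left.2 (subset_sdiff.2 ⟨hP.subset hC', hP.disjoint hC' hB hne⟩)]
    exact ⟨hne, hC'⟩
  · rintro ⟨hne, hC⟩
    exact ⟨⟨C, hC, inter_eq_left.2 (subset_sdiff.2 ⟨hP.subset hC, hP.disjoint hC hB hne⟩)⟩,
      hP.nonempty hC⟩

theorem Refines.restrictPart_union_restrictPart_sdiff (h : Refines Q P) (hP : IsPartitionOn S P)
    (hQ : IsPartitionOn S Q) (hB : B ∈ P) :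
    restrictPart Q B ∪ restrictPart Q (S \ B) = Q :=
  hQ.restrictPart_union_restrictPart_sdiff fun _ hC => h.subset_or_disjoint hP hB hC

theorem refines_union_of_erase (hB : B ∈ P) (hd : IsPartitionOn B d)
    (heP : Refines e (P.erase B)) : Refines (d ∪ e) P :=
  Refines.union (fun _ hD => ⟨B, hB, hd.subset hD⟩) (heP.subset_right (erase_subset B P))

theorem IsPartitionOn.prod_restrictPart {M : Type*} [CommMonoid M] (hP : IsPartitionOn S P)
    (g : Finset α → M) (hg : g ∅ = 1) (A : Finset α) :
    ∏ W ∈ restrictPart P A, g W = ∏ V ∈ P, g (V ∩ A) := by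
  have hres : restrictPart P A = (P.filter fun V => (V ∩ A).Nonempty).image (· ∩ A) := by
    rw [restrictPart, filter_image]
  rw [hres, prod_image, prod_filter_of_ne]
  · intro V _ hV
    rw [nonempty_iff_ne_empty]
    exact fun h => hV (h ▸ hg)
  · intro V hV W hW hVW
    obtain ⟨hV, x, hx⟩ := mem_filter.1 hV
    have hxW : x ∈ W ∩ A := (show V ∩ A = W ∩ A from hVW) ▸ hx
    exact hP.eq_of_mem hV (mem_filter.1 hW).1 (mem_inter.1 hx).1 (mem_inter.1 hxW).1

def blockOf (P : Finset (Finset α)) (x : α) : Finset α := (P.filter (x ∈ ·)).sup id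

theorem IsPartitionOn.blockOf_eq (hP : IsPartitionOn S P) (hB : B ∈ P) (hp : p ∈ B) :
    blockOf P p = B := by
  have h : P.filter (p ∈ ·) = {B} := by
    ext C
    simp only [mem_filter, mem_singleton]
    exact ⟨fun ⟨hC, hpC⟩ => hP.eq_of_mem hC hB hpC hp, by rintro rfl; exact ⟨hB, hp⟩⟩
  rw [blockOf, h, sup_singleton, id]

theorem IsPartitionOn.blockOf_mem (hP : IsPartitionOn S P) (hp : p ∈ S) :
    blockOf P p ∈ P ∧ p ∈ blockOf P p := by
  obtain ⟨B, hB, hpB⟩ := hP.exists_mem hp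
  rw [hP.blockOf_eq hB hpB]
  exact ⟨hB, hpB⟩

def glue (p : α) (d e : Finset (Finset α)) : Finset (Finset α) :=
  insert (blockOf d p ∪ blockOf e p) (d.erase (blockOf d p) ∪ e.erase (blockOf e p))

theorem glue_subset_or_subset (hpX : p ∈ X) (hd : IsPartitionOn X d) (he : IsPartitionOn Y e) :
    ∀ B ∈ glue p d e, p ∉ B → B ⊆ X ∨ B ⊆ Y := by
  intro B hB hpB
  rcases mem_insert.1 hB with rfl | hB
  · exact absurd (mem_union_left _ (hd.blockOf_mem hpX).2) hpB
  rcases mem_union.1 hB with hB | hB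
  · exact Or.inl (hd.subset (mem_of_mem_erase hB))
  · exact Or.inr (he.subset (mem_of_mem_erase hB))

theorem refines_of_restrictPart {c' : Finset (Finset α)} (hpX : p ∈ X) (hpY : p ∈ Y)
    (hc : IsPartitionOn (X ∪ Y) c) (hside : ∀ B ∈ c, p ∉ B → B ⊆ X ∨ B ⊆ Y)
    (hc' : IsPartitionOn (X ∪ Y) c') (hX : Refines (restrictPart c X) (restrictPart c' X))
    (hY : Refines (restrictPart c Y) (restrictPart c' Y)) : Refines c c' := by
  intro B hB
  by_cases hpB : p ∈ B
  · have hpBX : p ∈ B ∩ X := mem_inter.2 ⟨hpB, hpX⟩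
    have hpBY : p ∈ B ∩ Y := mem_inter.2 ⟨hpB, hpY⟩
    obtain ⟨C, hC, hBXC⟩ := hX.exists_superset_inter hB ⟨p, hpBX⟩
    obtain ⟨C', hC', hBYC'⟩ := hY.exists_superset_inter hB ⟨p, hpBY⟩
    obtain rfl := hc'.eq_of_mem hC hC' (hBXC hpBX) (hBYC' hpBY)
    refine ⟨C, hC, ?_⟩
    rw [← inter_eq_left.2 (hc.subset hB), inter_union_distrib_left]
    exact union_subset hBXC hBYC'
  · rcases hside B hB hpB with hBT | hBT
    · simpa only [inter_eq_left.2 hBT] using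
        hX.exists_superset_inter hB (by rw [inter_eq_left.2 hBT]; exact hc.nonempty hB)
    · simpa only [inter_eq_left.2 hBT] using
        hY.exists_superset_inter hB (by rw [inter_eq_left.2 hBT]; exact hc.nonempty hB)

end restrictPart

end Partitions

section Noncrossing

variable {α : Type*} [LinearOrder α] {S A : Finset α} {P Q d e : Finset (Finset α)}
  {B V W : Finset α}

/-- `Noncrossing P` unfolds to `∀ V ∈ P, ∀ W ∈ P, V ≠ W → ¬ Crosses V W`. -/
def Crosses (V W : Finset α) : Prop :=
  ∃ s₁ r₁ s₂ r₂, s₁ ∈ V ∧ s₂ ∈ V ∧ r₁ ∈ W ∧ r₂ ∈ W ∧ s₁ < r₁ ∧ r₁ < s₂ ∧ s₂ < r₂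

theorem Crosses.mono {V' W' : Finset α} (h : Crosses V W) (hV : V ⊆ V') (hW : W ⊆ W') :
    Crosses V' W' :=
  let ⟨s₁, r₁, s₂, r₂, h₁, h₂, h₃, h₄, h⟩ := h
  ⟨s₁, r₁, s₂, r₂, hV h₁, hV h₂, hW h₃, hW h₄, h⟩

theorem Noncrossing.mono (hP : Noncrossing P) (hQP : Q ⊆ P) : Noncrossing Q :=
  fun V hV W hW => hP V (hQP hV) W (hQP hW)

theorem noncrossing_singleton (A : Finset α) : Noncrossing {A} := by
  intro V hV W hW hVW
  rw [mem_singleton] at hV hW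
  exact absurd (hV.trans hW.symm) hVW

theorem Noncrossing.forall_lt_lt (hP : Noncrossing P) (hPS : IsPartitionOn S P) (hB : B ∈ P)
    (hW : W ∈ P) (hBW : B ≠ W) {x y z : α} (hx : x ∈ B) (hy : y ∈ B) (hz : z ∈ W)
    (hxz : x < z) (hzy : z < y) : ∀ w ∈ W, x < w ∧ w < y := by
  intro w hw
  have hwx : w ≠ x := fun h => disjoint_left.1 (hPS.disjoint hB hW hBW) hx (h ▸ hw)
  have hwy : w ≠ y := fun h => disjoint_left.1 (hPS.disjoint hB hW hBW) hy (h ▸ hw)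
  refine ⟨lt_of_le_of_ne (not_lt.1 fun hwx' => hP W hW B hB hBW.symm ?_) hwx.symm,
    lt_of_le_of_ne (not_lt.1 fun hyw => hP B hB W hW hBW ?_) hwy⟩
  · exact ⟨w, x, z, y, hw, hz, hx, hy, hwx', hxz, hzy⟩
  · exact ⟨x, z, y, w, hx, hy, hz, hw, hxz, hzy, hyw⟩

variable [DecidableEq α]

theorem Noncrossing.restrict (hP : Noncrossing P) (A : Finset α) :
    Noncrossing (restrictPart P A) := by
  intro V hV W hW hVW (hcr : Crosses _ _)
  obtain ⟨⟨B, hB, rfl⟩, -⟩ := mem_restrictPart.1 hV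
  obtain ⟨⟨C, hC, rfl⟩, -⟩ := mem_restrictPart.1 hW
  exact hP B hB C hC (fun h => hVW (h ▸ rfl)) (hcr.mono inter_subset_left inter_subset_left)

theorem Noncrossing.of_refines (hP : Noncrossing P) (hQP : Refines Q P)
    (hQ : ∀ V ∈ P, Noncrossing (restrictPart Q V)) : Noncrossing Q := by
  intro D hD E hE hDE (hcr : Crosses _ _)
  obtain ⟨V, hV, hDV⟩ := hQP D hD
  obtain ⟨W, hW, hEW⟩ := hQP E hE
  obtain rfl | hVW := eq_or_ne V W
  · obtain ⟨s₁, r₁, -, -, hs₁, -, hr₁, -⟩ := id hcr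
    refine hQ V hV D (mem_restrictPart_of_subset hD hDV ⟨s₁, hs₁⟩) E
      (mem_restrictPart_of_subset hE hEW ⟨r₁, hr₁⟩) hDE hcr
  · exact hP V hV W hW hVW (hcr.mono hDV hEW)

theorem Noncrossing.not_crosses_inter {T : Finset α} (hT : Noncrossing (restrictPart P T))
    (hP : IsPartitionOn S P) (hB : B ∈ P) (hW : W ∈ P) (hBW : B ≠ W) :
    ¬ Crosses (B ∩ T) (W ∩ T) := by
  intro hcr
  obtain ⟨s₁, r₁, -, -, hs₁, -, hr₁, -⟩ := id hcr
  refine hT _ (inter_mem_restrictPart hB ⟨s₁, hs₁⟩) _ (inter_mem_restrictPart hW ⟨r₁, hr₁⟩)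
    (fun h => hBW ?_) hcr
  exact hP.eq_of_mem hB hW (mem_inter.1 hs₁).1 (mem_inter.1 (h ▸ hs₁)).1

theorem NCOn.union_block (hP : NCOn A P) (hB : B ∈ P) (hd : NCOn B d) (he : NCOn (A \ B) e)
    (heP : Refines e (P.erase B)) : NCOn A (d ∪ e) := by
  have hBA : B ⊆ A := hP.1.subset hB
  have hdisj : Disjoint B (A \ B) := disjoint_sdiff
  refine ⟨union_sdiff_of_subset hBA ▸ hd.1.union he.1 hdisj,
    hP.2.of_refines (refines_union_of_erase hB hd.1 heP) fun V hV => ?_⟩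
  obtain rfl | hVB := eq_or_ne V B
  · rw [hd.1.restrictPart_union_left he.1 hdisj]
    exact hd.2
  · have hVAB : V ⊆ A \ B := subset_sdiff.2 ⟨hP.1.subset hV, hP.1.disjoint hV hB hVB⟩
    rw [← restrictPart_restrictPart hVAB, union_comm, he.1.restrictPart_union_left hd.1 hdisj.symm]
    exact he.2.restrict V

end Noncrossing

section MobiusNC

variable {n : ℕ} {A B : Finset (Fin n)} {P : Finset (Finset (Fin n))}

theorem mem_NCset : P ∈ NCset A ↔ NCOn A P := by simp [NCset]

theorem bijOn_restrictPart_block (hP : NCOn A P) (hB : B ∈ P) :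
    Set.BijOn (fun z => (restrictPart z B, restrictPart z (A \ B)))
      ((NCset A).filter (Refines · P))
      ((NCset B : Set _) ×ˢ ((NCset (A \ B)).filter (Refines · (P.erase B)) : Set _)) := by
  have hBA : B ⊆ A := hP.1.subset hB
  refine ⟨fun z hz => ?_, fun z hz z' hz' h => ?_, fun de hde => ?_⟩
  · obtain ⟨hz, hzP⟩ := mem_filter.1 (mem_coe.1 hz)
    have hz := mem_NCset.1 hz
    refine ⟨mem_NCset.2 ⟨hz.1.restrict hBA, hz.2.restrict B⟩, mem_filter.2 ⟨mem_NCset.2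
      ⟨hz.1.restrict sdiff_subset, hz.2.restrict _⟩, ?_⟩⟩
    rw [← hP.1.restrictPart_sdiff_of_mem hB]
    exact hzP.restrict _
  · obtain ⟨hz, hzP⟩ := mem_filter.1 (mem_coe.1 hz)
    obtain ⟨hz', hz'P⟩ := mem_filter.1 (mem_coe.1 hz')
    obtain ⟨h₁, h₂⟩ := Prod.mk.inj h
    rw [← hzP.restrictPart_union_restrictPart_sdiff hP.1 (mem_NCset.1 hz).1 hB,
      ← hz'P.restrictPart_union_restrictPart_sdiff hP.1 (mem_NCset.1 hz').1 hB, h₁, h₂]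
  · obtain ⟨d, e⟩ := de
    obtain ⟨hd, he⟩ := hde
    obtain ⟨he, heP⟩ := mem_filter.1 (mem_coe.1 he)
    replace hd : NCOn B d := mem_NCset.1 (mem_coe.1 hd)
    replace he : NCOn (A \ B) e := mem_NCset.1 he
    have hdisj : Disjoint B (A \ B) := disjoint_sdiff
    refine ⟨d ∪ e, mem_filter.2 ⟨mem_NCset.2 (hP.union_block hB hd he heP),
      refines_union_of_erase hB hd.1 heP⟩, ?_⟩
    dsimp only
    rw [hd.1.restrictPart_union_left he.1 hdisj, union_comm,
      he.1.restrictPart_union_left hd.1 hdisj.symm]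

theorem refines_iff_restrictPart_block (hP : IsPartitionOn A P) (hB : B ∈ P)
    {z z' : Finset (Finset (Fin n))} (hz : z ∈ (NCset A).filter (Refines · P))
    (hz' : z' ∈ (NCset A).filter (Refines · P)) :
    Refines z z' ↔ Refines (restrictPart z B) (restrictPart z' B) ∧
      Refines (restrictPart z (A \ B)) (restrictPart z' (A \ B)) := by
  obtain ⟨hz, hzP⟩ := mem_filter.1 hz
  obtain ⟨hz', hz'P⟩ := mem_filter.1 hz'
  refine ⟨fun h => ⟨h.restrict B, h.restrict _⟩, fun ⟨h₁, h₂⟩ => ?_⟩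
  rw [← hzP.restrictPart_union_restrictPart_sdiff hP (mem_NCset.1 hz).1 hB]
  conv_rhs => rw [← hz'P.restrictPart_union_restrictPart_sdiff hP (mem_NCset.1 hz').1 hB]
  exact (h₁.subset_right subset_union_left).union (h₂.subset_right subset_union_right)

variable {μNC : Finset (Fin n) → Finset (Finset (Fin n)) → Finset (Finset (Fin n)) → ℂ}

theorem isLeftMobiusOn_prod_blocks (hμNC : ∀ A, IsMobiusOn (NCset A) Refines (μNC A))
    (P : Finset (Finset (Fin n))) {A : Finset (Fin n)} (hP : NCOn A P) :
    IsLeftMobiusOn ((NCset A).filter (Refines · P)) Refines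
      (fun x y => ∏ V ∈ P, μNC V (restrictPart x V) (restrictPart y V)) := by
  induction P using Finset.induction_on generalizing A with
  | empty =>
    have hbot : (NCset A).filter (Refines · ∅) = {∅} := by
      ext z
      simp only [mem_filter, mem_NCset, mem_singleton]
      refine ⟨fun ⟨_, hz⟩ => eq_empty_of_forall_notMem fun B hB => ?_,
        by rintro rfl; exact ⟨hP, Refines.refl _⟩⟩
      obtain ⟨_, h, -⟩ := hz B hB
      exact notMem_empty _ h
    rw [hbot]
    exact isLeftMobiusOn_singleton (Refines.refl _) prod_empty
  | insert B P hBP ih =>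
    have hB : B ∈ insert B P := mem_insert_self B P
    have herase : (insert B P).erase B = P := erase_insert hBP
    have hP' : NCOn (A \ B) P := herase ▸ ⟨hP.1.erase hB, hP.2.mono (erase_subset _ _)⟩
    refine ((hμNC B).isLeftMobiusOn.prod (ih hP') _ (herase ▸ bijOn_restrictPart_block hP hB)
      fun z hz z' hz' => refines_iff_restrictPart_block hP.1 hB hz hz').congr fun x _ y _ => ?_
    have hPA : ∀ V ∈ P, V ⊆ A \ B := fun V hV => hP'.1.subset hV
    rw [prod_insert hBP]
    congr 1
    exact prod_congr rfl fun V hV => by simp only [restrictPart_restrictPart (hPA V hV)]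

theorem mobiusNC_eq_prod_blocks (hμNC : ∀ A, IsMobiusOn (NCset A) Refines (μNC A))
    {τ : Finset (Finset (Fin n))} (hτ : NCOn A τ) (hP : NCOn A P) (hτP : Refines τ P) :
    μNC A τ P = ∏ V ∈ P, μNC V (restrictPart τ V) {V} := by
  rw [← (isLeftMobiusOn_prod_blocks hμNC P hP).eq_of_isMobiusOn
    ((hμNC A).filter_le (fun _ _ _ h₁ h₂ => h₁.trans h₂) P) (fun z _ => Refines.refl z)
    (fun _ _ _ h₁ h₂ => h₁.trans h₂)
    (mem_filter.2 ⟨mem_NCset.2 hτ, hτP⟩) (mem_filter.2 ⟨mem_NCset.2 hP, Refines.refl P⟩) hτP]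
  exact prod_congr rfl fun V hV => by rw [hP.1.restrictPart_of_mem hV]

theorem mobiusNC_empty (hμNC : ∀ A, IsMobiusOn (NCset A) Refines (μNC A)) : μNC ∅ ∅ ∅ = 1 := by
  have hNC : NCset (∅ : Finset (Fin n)) = {∅} := by
    ext P
    rw [mem_NCset, mem_singleton]
    refine ⟨fun hP => hP.1.eq_empty, ?_⟩
    rintro rfl
    exact ⟨⟨by simp, by simp⟩, by simp [Noncrossing]⟩
  have h := (hμNC ∅ ∅ (by simp [hNC]) ∅ (by simp [hNC]) (Refines.refl _)).1
  rwa [hNC, filter_singleton, if_pos ⟨Refines.refl _, Refines.refl _⟩, sum_singleton,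
    if_pos rfl] at h

end MobiusNC

section INC

variable {α : Type*} [LinearOrder α] {χ : α → Bool} {S B : Finset α} {c : Finset (Finset α)} {p : α}

/-- Otherwise the block of `p` would be an inner block. -/
theorem INCOn.mem_of_lt_of_lt (hc : INCOn S χ c) (hp : p ∈ S) (hχ : χ p = true) (hB : B ∈ c)
    {x y : α} (hx : x ∈ B) (hy : y ∈ B) (hxp : x < p) (hpy : p < y) : p ∈ B := by
  obtain ⟨W, hW, hpW⟩ := hc.1.exists_mem hp
  by_contra hpB
  have hWB : W ≠ B := fun h => hpB (h ▸ hpW)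
  have hinner : IsInnerBlock c W :=
    ⟨B, hB, hWB.symm, x, hx, y, hy, hc.2.1.forall_lt_lt hc.1 hB hW hWB.symm hx hy hpW hxp hpy⟩
  simp [hc.2.2 W hW hinner p hpW] at hχ

theorem INCOn.ncOn (hc : INCOn S χ c) : NCOn S c := ⟨hc.1, hc.2.1⟩

theorem incOn_iff_ncOn (h : ∀ k ∈ S, χ k = true → (∀ x ∈ S, k ≤ x) ∨ ∀ x ∈ S, x ≤ k) :
    INCOn S χ c ↔ NCOn S c := by
  refine ⟨INCOn.ncOn, fun hc => ⟨hc.1, hc.2, fun V hV hinner k hk => ?_⟩⟩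
  obtain ⟨W, hW, -, s, hs, t, ht, hst⟩ := hinner
  by_contra hχ
  rcases h k (hc.1.subset hV hk) (by simpa using hχ) with hmin | hmax
  · exact (hst k hk).1.not_ge (hmin s (hc.1.subset hW hs))
  · exact (hst k hk).2.not_ge (hmax t (hc.1.subset hW ht))

theorem INCOn.restrict [DecidableEq α] {T : Finset α} (hc : INCOn S χ c) (hT : T ⊆ S) :
    INCOn T χ (restrictPart c T) := by
  refine ⟨hc.1.restrict hT, hc.2.1.restrict T, fun C hC hinner k hk => ?_⟩
  obtain ⟨⟨B, hB, rfl⟩, -⟩ := mem_restrictPart.1 hC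
  obtain ⟨_, hW', hW'C, s, hs, t, ht, hst⟩ := hinner
  obtain ⟨⟨W, hW, rfl⟩, -⟩ := mem_restrictPart.1 hW'
  have hWB : W ≠ B := fun h => hW'C (h ▸ rfl)
  obtain ⟨hkB, -⟩ := mem_inter.1 hk
  refine hc.2.2 B hB ⟨W, hW, hWB, s, (mem_inter.1 hs).1, t, (mem_inter.1 ht).1, ?_⟩ k hkB
  exact hc.2.1.forall_lt_lt hc.1 hW hB hWB (mem_inter.1 hs).1 (mem_inter.1 ht).1 hkB
    (hst k hk).1 (hst k hk).2

end INC

section Gluing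

variable {α : Type*} [LinearOrder α] {χ : α → Bool} {X Y B W : Finset α}
  {c d e : Finset (Finset α)} {p x : α}

structure IsSplitAt (X Y : Finset α) (p : α) : Prop where
  mem_left : p ∈ X
  mem_right : p ∈ Y
  le_of_mem_left ⦃x : α⦄ : x ∈ X → x ≤ p
  le_of_mem_right ⦃y : α⦄ : y ∈ Y → p ≤ y

theorem isSplitAt_Icc [LocallyFiniteOrder α] {a b : α} (hab : a ≤ p) (hpb : p ≤ b) :
    IsSplitAt (Icc a p) (Icc p b) p :=
  ⟨right_mem_Icc.2 hab, left_mem_Icc.2 hpb, fun _ hx => (mem_Icc.1 hx).2,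
    fun _ hy => (mem_Icc.1 hy).1⟩

theorem IsSplitAt.eq_of_mem (hp : IsSplitAt X Y p) (hxX : x ∈ X) (hxY : x ∈ Y) : x = p :=
  le_antisymm (hp.le_of_mem_left hxX) (hp.le_of_mem_right hxY)

theorem IsSplitAt.lt_of_mem_left (hp : IsSplitAt X Y p) (hxX : x ∈ X) (hxp : x ≠ p) : x < p :=
  lt_of_le_of_ne (hp.le_of_mem_left hxX) hxp

theorem IsSplitAt.lt_of_mem_right (hp : IsSplitAt X Y p) (hxY : x ∈ Y) (hxp : x ≠ p) : p < x :=
  lt_of_le_of_ne (hp.le_of_mem_right hxY) hxp.symm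

variable [DecidableEq α]

theorem Finset.Icc_union_Icc_eq_Icc [LocallyFiniteOrder α] {a b c : α} (hab : a ≤ b)
    (hbc : b ≤ c) : Icc a b ∪ Icc b c = Icc a c := by
  rw [← coe_inj, coe_union, coe_Icc, coe_Icc, coe_Icc, Set.Icc_union_Icc_eq_Icc hab hbc]

theorem IsSplitAt.mem_left_of_le (hp : IsSplitAt X Y p) (hx : x ∈ X ∪ Y) (hxp : x ≤ p) :
    x ∈ X :=
  (mem_union.1 hx).elim id fun hxY => le_antisymm hxp (hp.le_of_mem_right hxY) ▸ hp.mem_left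

theorem IsSplitAt.mem_right_of_le (hp : IsSplitAt X Y p) (hx : x ∈ X ∪ Y) (hpx : p ≤ x) :
    x ∈ Y :=
  (mem_union.1 hx).elim (fun hxX => le_antisymm (hp.le_of_mem_left hxX) hpx ▸ hp.mem_right) id

theorem IsSplitAt.mem_of_lt_of_lt (hp : IsSplitAt X Y p)
    (hside : p ∉ W → W ⊆ X ∨ W ⊆ Y) {s t : α} (hs : s ∈ W) (ht : t ∈ W) (hsp : s < p)
    (hpt : p < t) : p ∈ W := by
  by_contra hpW
  rcases hside hpW with h | h
  · exact (hp.le_of_mem_left (h ht)).not_gt hpt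
  · exact (hp.le_of_mem_right (h hs)).not_gt hsp

theorem INCOn.subset_or_subset (hc : INCOn (X ∪ Y) χ c) (hp : IsSplitAt X Y p)
    (hχ : χ p = true) : ∀ B ∈ c, p ∉ B → B ⊆ X ∨ B ⊆ Y := by
  intro B hB hpB
  by_contra! h
  obtain ⟨y, hyB, hyX⟩ := not_subset.1 h.1
  obtain ⟨x, hxB, hxY⟩ := not_subset.1 h.2
  exact hpB (hc.mem_of_lt_of_lt (mem_union_left _ hp.mem_left) hχ hB hxB hyB
    (lt_of_not_ge fun h => hxY (hp.mem_right_of_le (hc.1.subset hB hxB) h))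
    (lt_of_not_ge fun h => hyX (hp.mem_left_of_le (hc.1.subset hB hyB) h)))

theorem IsSplitAt.isPartitionOn_glue (hp : IsSplitAt X Y p)
    (hd : IsPartitionOn X d) (he : IsPartitionOn Y e) : IsPartitionOn (X ∪ Y) (glue p d e) := by
  obtain ⟨hD, hpD⟩ := hd.blockOf_mem hp.mem_left
  obtain ⟨hE, hpE⟩ := he.blockOf_mem hp.mem_right
  set D := blockOf d p
  set E := blockOf e p
  have hDX := hd.subset hD
  have hEY := he.subset hE
  have h₁ : Disjoint (X \ D) (Y \ E) := disjoint_left.2 fun x hx hx' =>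
    (mem_sdiff.1 hx).2 (hp.eq_of_mem (mem_sdiff.1 hx).1 (mem_sdiff.1 hx').1 ▸ hpD)
  have h₂ : Disjoint (D ∪ E) (X \ D ∪ Y \ E) := by
    rw [disjoint_union_left, disjoint_union_right, disjoint_union_right]
    refine ⟨⟨disjoint_sdiff, disjoint_left.2 fun x hx hx' => ?_⟩,
      disjoint_left.2 fun x hx hx' => ?_, disjoint_sdiff⟩
    · exact (mem_sdiff.1 hx').2 (hp.eq_of_mem (hDX hx) (mem_sdiff.1 hx').1 ▸ hpE)
    · exact (mem_sdiff.1 hx').2 (hp.eq_of_mem (mem_sdiff.1 hx').1 (hEY hx) ▸ hpD)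
  have hXY : D ∪ E ∪ (X \ D ∪ Y \ E) = X ∪ Y := by
    rw [union_union_union_comm, union_sdiff_of_subset hDX, union_sdiff_of_subset hEY]
  rw [glue, insert_eq, ← hXY]
  exact (IsPartitionOn.singleton ⟨p, mem_union_left _ hpD⟩).union
    ((hd.erase hD).union (he.erase hE) h₁) h₂

theorem IsSplitAt.restrictPart_glue_left (hp : IsSplitAt X Y p)
    (hd : IsPartitionOn X d) (he : IsPartitionOn Y e) : restrictPart (glue p d e) X = d := by
  obtain ⟨hD, hpD⟩ := hd.blockOf_mem hp.mem_left
  obtain ⟨hE, hpE⟩ := he.blockOf_mem hp.mem_right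
  have hDE : (blockOf d p ∪ blockOf e p) ∩ X = blockOf d p := by
    refine subset_antisymm (fun x hx => ?_) (subset_inter subset_union_left (hd.subset hD))
    obtain ⟨hx, hxX⟩ := mem_inter.1 hx
    exact (mem_union.1 hx).elim id fun hxE =>
      hp.eq_of_mem hxX (he.subset hE hxE) ▸ hpD
  have hYX : Disjoint (Y \ blockOf e p) X := disjoint_left.2 fun x hx hxX =>
    (mem_sdiff.1 hx).2 (hp.eq_of_mem hxX (mem_sdiff.1 hx).1 ▸ hpE)
  rw [glue, insert_eq, restrictPart_union, restrictPart_union,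
    restrictPart_singleton (by rw [hDE]; exact ⟨p, hpD⟩), hDE,
    (hd.erase hD).restrictPart_of_subset sdiff_subset, (he.erase hE).restrictPart_of_disjoint hYX,
    union_empty, ← insert_eq, insert_erase hD]

theorem IsSplitAt.restrictPart_glue_right (hp : IsSplitAt X Y p)
    (hd : IsPartitionOn X d) (he : IsPartitionOn Y e) : restrictPart (glue p d e) Y = e := by
  obtain ⟨hD, hpD⟩ := hd.blockOf_mem hp.mem_left
  obtain ⟨hE, hpE⟩ := he.blockOf_mem hp.mem_right
  have hDE : (blockOf d p ∪ blockOf e p) ∩ Y = blockOf e p := by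
    refine subset_antisymm (fun x hx => ?_) (subset_inter subset_union_right (he.subset hE))
    obtain ⟨hx, hxY⟩ := mem_inter.1 hx
    exact (mem_union.1 hx).elim (fun hxD =>
      hp.eq_of_mem (hd.subset hD hxD) hxY ▸ hpE) id
  have hXY : Disjoint (X \ blockOf d p) Y := disjoint_left.2 fun x hx hxY =>
    (mem_sdiff.1 hx).2 (hp.eq_of_mem (mem_sdiff.1 hx).1 hxY ▸ hpD)
  rw [glue, insert_eq, restrictPart_union, restrictPart_union,
    restrictPart_singleton (by rw [hDE]; exact ⟨p, hpE⟩), hDE,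
    (hd.erase hD).restrictPart_of_disjoint hXY, (he.erase hE).restrictPart_of_subset sdiff_subset,
    empty_union, ← insert_eq, insert_erase hE]

theorem IsSplitAt.noncrossing_of_restrictPart (hp : IsSplitAt X Y p)
    (hc : IsPartitionOn (X ∪ Y) c) (hside : ∀ B ∈ c, p ∉ B → B ⊆ X ∨ B ⊆ Y)
    (hcX : Noncrossing (restrictPart c X)) (hcY : Noncrossing (restrictPart c Y)) :
    Noncrossing c := by
  intro B₁ hB₁ B₂ hB₂ hne ⟨s₁, r₁, s₂, r₂, hs₁, hs₂, hr₁, hr₂, h₁, h₂, h₃⟩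
  have cX := hcX.not_crosses_inter hc hB₁ hB₂ hne
  have cY := hcY.not_crosses_inter hc hB₁ hB₂ hne
  have inX : ∀ {x B}, B ∈ c → x ∈ B → x ≤ p → x ∈ B ∩ X := fun hB hx hxp =>
    mem_inter.2 ⟨hx, hp.mem_left_of_le (hc.subset hB hx) hxp⟩
  have inY : ∀ {x B}, B ∈ c → x ∈ B → p ≤ x → x ∈ B ∩ Y := fun hB hx hpx =>
    mem_inter.2 ⟨hx, hp.mem_right_of_le (hc.subset hB hx) hpx⟩
  rcases le_or_gt r₂ p with hr₂p | hpr₂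
  · exact cX ⟨s₁, r₁, s₂, r₂, inX hB₁ hs₁ (by order), inX hB₁ hs₂ (by order),
      inX hB₂ hr₁ (by order), inX hB₂ hr₂ hr₂p, h₁, h₂, h₃⟩
  rcases le_or_gt p s₁ with hps₁ | hs₁p
  · exact cY ⟨s₁, r₁, s₂, r₂, inY hB₁ hs₁ hps₁, inY hB₁ hs₂ (by order),
      inY hB₂ hr₁ (by order), inY hB₂ hr₂ (by order), h₁, h₂, h₃⟩
  by_cases hpB₂ : p ∈ B₂
  · have hpB₁ : p ∉ B₁ := fun h => hne (hc.eq_of_mem hB₁ hB₂ h hpB₂)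
    have hB₁X : B₁ ⊆ X :=
      (hside B₁ hB₁ hpB₁).resolve_right fun h => hs₁p.not_ge (hp.le_of_mem_right (h hs₁))
    have hs₂p : s₂ < p := hp.lt_of_mem_left (hB₁X hs₂) (ne_of_mem_of_not_mem hs₂ hpB₁)
    exact cX ⟨s₁, r₁, s₂, p, inX hB₁ hs₁ hs₁p.le, inX hB₁ hs₂ hs₂p.le, inX hB₂ hr₁ (by order),
      inX hB₂ hpB₂ le_rfl, h₁, h₂, hs₂p⟩
  · have hB₂Y : B₂ ⊆ Y :=
      (hside B₂ hB₂ hpB₂).resolve_left fun h => hpr₂.not_ge (hp.le_of_mem_left (h hr₂))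
    have hpr₁ : p < r₁ := hp.lt_of_mem_right (hB₂Y hr₁) (ne_of_mem_of_not_mem hr₁ hpB₂)
    have hpB₁ : p ∈ B₁ := hp.mem_of_lt_of_lt (hside B₁ hB₁) hs₁ hs₂ hs₁p (hpr₁.trans h₂)
    exact cY ⟨p, r₁, s₂, r₂, inY hB₁ hpB₁ le_rfl, inY hB₁ hs₂ (by order), inY hB₂ hr₁ hpr₁.le,
      inY hB₂ hr₂ hpr₂.le, hpr₁, h₂, h₃⟩

/-- The surrounding block either ends left of `p` or passes over `p`, and then contains `p`. -/
theorem IsSplitAt.isInnerBlock_restrictPart_left (hp : IsSplitAt X Y p)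
    (hc : IsPartitionOn (X ∪ Y) c) (hside : ∀ B ∈ c, p ∉ B → B ⊆ X ∨ B ⊆ Y) (hB : B ∈ c)
    (hBX : B ⊆ X) (hpB : p ∉ B) (hinner : IsInnerBlock c B) :
    IsInnerBlock (restrictPart c X) (B ∩ X) := by
  obtain ⟨W, hW, -, s, hs, t, ht, hst⟩ := hinner
  obtain ⟨k, hk⟩ := hc.nonempty hB
  have hBp : ∀ b ∈ B, b < p := fun b hb => hp.lt_of_mem_left (hBX hb) (ne_of_mem_of_not_mem hb hpB)
  have hsX : s ∈ W ∩ X :=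
    mem_inter.2 ⟨hs, hp.mem_left_of_le (hc.subset hW hs) ((hst k hk).1.trans (hBp k hk)).le⟩
  obtain ⟨t', ht', hBt'⟩ : ∃ t' ∈ W ∩ X, ∀ b ∈ B, b < t' := by
    rcases le_or_gt t p with htp | hpt
    · exact ⟨t, mem_inter.2 ⟨ht, hp.mem_left_of_le (hc.subset hW ht) htp⟩,
        fun b hb => (hst b hb).2⟩
    · exact ⟨p, mem_inter.2 ⟨hp.mem_of_lt_of_lt (hside W hW) hs ht
        ((hst k hk).1.trans (hBp k hk)) hpt, hp.mem_left⟩, hBp⟩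
  refine ⟨W ∩ X, inter_mem_restrictPart hW ⟨s, hsX⟩, fun h => ?_, s, hsX, t', ht', fun v hv =>
    ⟨(hst v (mem_inter.1 hv).1).1, hBt' v (mem_inter.1 hv).1⟩⟩
  exact (hst s (mem_inter.1 (h ▸ hsX)).1).1.false

theorem IsSplitAt.isInnerBlock_restrictPart_right (hp : IsSplitAt X Y p)
    (hc : IsPartitionOn (X ∪ Y) c) (hside : ∀ B ∈ c, p ∉ B → B ⊆ X ∨ B ⊆ Y) (hB : B ∈ c)
    (hBY : B ⊆ Y) (hpB : p ∉ B) (hinner : IsInnerBlock c B) :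
    IsInnerBlock (restrictPart c Y) (B ∩ Y) := by
  obtain ⟨W, hW, -, s, hs, t, ht, hst⟩ := hinner
  obtain ⟨k, hk⟩ := hc.nonempty hB
  have hpB' : ∀ b ∈ B, p < b := fun b hb =>
    hp.lt_of_mem_right (hBY hb) (ne_of_mem_of_not_mem hb hpB)
  have htY : t ∈ W ∩ Y :=
    mem_inter.2 ⟨ht, hp.mem_right_of_le (hc.subset hW ht) ((hpB' k hk).trans (hst k hk).2).le⟩
  obtain ⟨s', hs', hs'B⟩ : ∃ s' ∈ W ∩ Y, ∀ b ∈ B, s' < b := by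
    rcases le_or_gt p s with hps | hsp
    · exact ⟨s, mem_inter.2 ⟨hs, hp.mem_right_of_le (hc.subset hW hs) hps⟩,
        fun b hb => (hst b hb).1⟩
    · exact ⟨p, mem_inter.2 ⟨hp.mem_of_lt_of_lt (hside W hW) hs ht hsp
        ((hpB' k hk).trans (hst k hk).2), hp.mem_right⟩, hpB'⟩
  refine ⟨W ∩ Y, inter_mem_restrictPart hW ⟨t, htY⟩, fun h => ?_, s', hs', t, htY, fun v hv =>
    ⟨hs'B v (mem_inter.1 hv).1, (hst v (mem_inter.1 hv).1).2⟩⟩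
  exact (hst t (mem_inter.1 (h ▸ htY)).1).2.false

theorem IsSplitAt.incOn_of_restrictPart (hp : IsSplitAt X Y p)
    (hc : IsPartitionOn (X ∪ Y) c) (hside : ∀ B ∈ c, p ∉ B → B ⊆ X ∨ B ⊆ Y)
    (hcX : INCOn X χ (restrictPart c X)) (hcY : INCOn Y χ (restrictPart c Y)) :
    INCOn (X ∪ Y) χ c := by
  refine ⟨hc, hp.noncrossing_of_restrictPart hc hside hcX.2.1 hcY.2.1,
    fun B hB hinner k hk => ?_⟩
  by_cases hpB : p ∈ B
  · obtain ⟨W, hW, hWB, s, hs, t, ht, hst⟩ := hinner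
    exact absurd (hc.eq_of_mem hW hB (hp.mem_of_lt_of_lt (hside W hW) hs ht
      (hst p hpB).1 (hst p hpB).2) hpB) hWB
  rcases hside B hB hpB with hBT | hBT
  · have hkT : k ∈ B ∩ X := mem_inter.2 ⟨hk, hBT hk⟩
    exact hcX.2.2 _ (inter_mem_restrictPart hB ⟨k, hkT⟩)
      (hp.isInnerBlock_restrictPart_left hc hside hB hBT hpB hinner) k hkT
  · have hkT : k ∈ B ∩ Y := mem_inter.2 ⟨hk, hBT hk⟩
    exact hcY.2.2 _ (inter_mem_restrictPart hB ⟨k, hkT⟩)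
      (hp.isInnerBlock_restrictPart_right hc hside hB hBT hpB hinner) k hkT

end Gluing

section MobiusINC

variable {n : ℕ} {χ : Fin n → Bool} {X Y : Finset (Fin n)} {p : Fin n}

theorem mem_INCset {S : Finset (Fin n)} {P : Finset (Finset (Fin n))} :
    P ∈ INCset S χ ↔ INCOn S χ P := by
  simp [INCset]

theorem INCset_singleton (x : Fin n) : INCset {x} χ = {{{x}}} := by
  ext c
  rw [mem_INCset, mem_singleton]
  refine ⟨fun hc => hc.1.eq_singleton, ?_⟩
  rintro rfl
  refine ⟨IsPartitionOn.singleton (singleton_nonempty x), noncrossing_singleton _, ?_⟩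
  rintro V hV ⟨W, hW, hWV, -⟩
  exact absurd ((mem_singleton.1 hW).trans (mem_singleton.1 hV).symm) hWV

theorem INCset_Icc_eq_NCset {a b : Fin n} (h : ∀ x, a < x → x < b → χ x = false) :
    INCset (Icc a b) χ = NCset (Icc a b) := by
  ext c
  rw [mem_INCset, mem_NCset]
  refine incOn_iff_ncOn fun k hk hχ => ?_
  obtain ⟨hak, hkb⟩ := mem_Icc.1 hk
  rcases hak.lt_or_eq with hak | rfl
  · rcases hkb.lt_or_eq with hkb | rfl
    · simp [h k hak hkb] at hχ
    · exact Or.inr fun x hx => (mem_Icc.1 hx).2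
  · exact Or.inl fun x hx => (mem_Icc.1 hx).1

theorem IsSplitAt.bijOn_restrictPart_glue (hp : IsSplitAt X Y p) (hχ : χ p = true) :
    Set.BijOn (fun c => (restrictPart c X, restrictPart c Y)) (INCset (X ∪ Y) χ)
      ((INCset X χ : Set _) ×ˢ (INCset Y χ : Set _)) := by
  refine ⟨fun c hc => ?_, fun c hc c' hc' h => ?_, fun de hde => ?_⟩
  · have hc := mem_INCset.1 hc
    exact ⟨mem_INCset.2 (hc.restrict subset_union_left),
      mem_INCset.2 (hc.restrict subset_union_right)⟩
  · have hc := mem_INCset.1 hc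
    have hc' := mem_INCset.1 hc'
    obtain ⟨hcX, hcY⟩ := Prod.mk.inj h
    have hside := hc.subset_or_subset hp hχ
    have hside' := hc'.subset_or_subset hp hχ
    exact Refines.antisymm hc.1 hc'.1
      (refines_of_restrictPart hp.mem_left hp.mem_right hc.1 hside hc'.1
        (hcX ▸ .refl _) (hcY ▸ .refl _))
      (refines_of_restrictPart hp.mem_left hp.mem_right hc'.1 hside' hc.1
        (hcX ▸ .refl _) (hcY ▸ .refl _))
  · obtain ⟨d, e⟩ := de
    obtain ⟨hd, he⟩ := hde
    replace hd : INCOn X χ d := mem_INCset.1 hd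
    replace he : INCOn Y χ e := mem_INCset.1 he
    have hgX := hp.restrictPart_glue_left hd.1 he.1
    have hgY := hp.restrictPart_glue_right hd.1 he.1
    refine ⟨glue p d e, mem_INCset.2 (hp.incOn_of_restrictPart
      (hp.isPartitionOn_glue hd.1 he.1) (glue_subset_or_subset hp.mem_left hd.1 he.1)
      (by rwa [hgX]) (by rwa [hgY])), ?_⟩
    dsimp only
    rw [hgX, hgY]

theorem IsSplitAt.refines_iff_restrictPart_glue (hp : IsSplitAt X Y p) (hχ : χ p = true)
    {c c' : Finset (Finset (Fin n))} (hc : c ∈ INCset (X ∪ Y) χ) (hc' : c' ∈ INCset (X ∪ Y) χ) :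
    Refines c c' ↔ Refines (restrictPart c X) (restrictPart c' X) ∧
      Refines (restrictPart c Y) (restrictPart c' Y) := by
  have hc := mem_INCset.1 hc
  exact ⟨fun h => ⟨h.restrict X, h.restrict Y⟩, fun ⟨h₁, h₂⟩ => refines_of_restrictPart
    hp.mem_left hp.mem_right hc.1 (hc.subset_or_subset hp hχ) (mem_INCset.1 hc').1 h₁ h₂⟩

variable {μNC : Finset (Fin n) → Finset (Finset (Fin n)) → Finset (Finset (Fin n)) → ℂ}

theorem isLeftMobiusOn_INCset_Icc (hμNC : ∀ A, IsMobiusOn (NCset A) Refines (μNC A)) (m : ℕ)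
    (l : Fin (m + 1) → Fin n) (hmono : StrictMono l) (hχl : ∀ i, χ (l i) = true)
    (hχ : ∀ (i : Fin m) x, l i.castSucc < x → x < l i.succ → χ x = false) :
    IsLeftMobiusOn (INCset (Icc (l 0) (l (Fin.last m))) χ) Refines fun a b =>
      ∏ i : Fin m, μNC (Icc (l i.castSucc) (l i.succ))
        (restrictPart a (Icc (l i.castSucc) (l i.succ)))
        (restrictPart b (Icc (l i.castSucc) (l i.succ))) := by
  induction m with
  | zero =>
    rw [Fin.last_zero, Icc_self, INCset_singleton]
    exact isLeftMobiusOn_singleton (Refines.refl _) (by simp)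
  | succ m ih =>
    have hl₀ : l 0 ≤ l (Fin.last m).castSucc := hmono.monotone (Fin.zero_le _)
    have hl₁ : l (Fin.last m).castSucc ≤ l (Fin.last m).succ :=
      hmono.monotone (Fin.castSucc_le_succ _)
    have hp := isSplitAt_Icc hl₀ hl₁
    have hF₁ := ih (fun i => l i.castSucc) (hmono.comp Fin.strictMono_castSucc) (fun i => hχl _)
      fun i x h₁ h₂ => hχ i.castSucc x h₁ (by rwa [Fin.succ_castSucc])
    rw [Fin.castSucc_zero] at hF₁
    have hF₂ := (hμNC (Icc (l (Fin.last m).castSucc) (l (Fin.last m).succ))).isLeftMobiusOn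
    rw [← INCset_Icc_eq_NCset (hχ (Fin.last m))] at hF₂
    rw [← Fin.succ_last, ← Icc_union_Icc_eq_Icc hl₀ hl₁]
    refine (hF₁.prod hF₂ _ (hp.bijOn_restrictPart_glue (hχl _)) fun a ha b hb =>
      hp.refines_iff_restrictPart_glue (hχl _) ha hb).congr fun a _ b _ => ?_
    rw [Fin.prod_univ_castSucc, Fin.succ_last]
    congr 1
    refine prod_congr rfl fun i _ => ?_
    have hI : Icc (l i.castSucc.castSucc) (l i.succ.castSucc) ⊆
        Icc (l 0) (l (Fin.last m).castSucc) :=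
      Icc_subset_Icc (hmono.monotone (Fin.zero_le _))
        (hmono.monotone (Fin.castSucc_le_castSucc_iff.2 (Fin.le_last _)))
    simp only [Fin.succ_castSucc, restrictPart_restrictPart hI]

theorem eq_false_of_lt_of_lt_succ {m : ℕ} {l : Fin (m + 1) → Fin n} (hmono : StrictMono l)
    (hcirc : ∀ k : Fin n, χ k = true ↔ ∃ i, l i = k) (i : Fin m) (x : Fin n)
    (h₁ : l i.castSucc < x) (h₂ : x < l i.succ) : χ x = false := by
  by_contra h
  obtain ⟨j, rfl⟩ := (hcirc x).1 (by simpa using h)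
  have h₁ := Fin.lt_def.1 (hmono.lt_iff_lt.1 h₁)
  have h₂ := Fin.lt_def.1 (hmono.lt_iff_lt.1 h₂)
  simp only [Fin.val_castSucc, Fin.val_succ] at h₁ h₂
  omega

end MobiusINC

/-- μ_INC(σ,π) = ∏_{V ∈ π} ∏_{i=1}^m μ_NC(σ_i|_{V ∩ [l_{i-1},l_i]},
1_{V ∩ [l_{i-1},l_i]}), where μ_NC is the Möbius function of the noncrossing
partition lattice of the relevant ordered set and μ over the empty set is 1
(the one-block "partition" of ∅ being the empty partition). -/
theorem mobius_INC_eq_prod_mobius_NC {n m : ℕ} (hn : 0 < n) (χ : Fin n → Bool)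
    (l : Fin (m + 1) → Fin n) (hmono : StrictMono l)
    (h0 : l 0 = ⟨0, hn⟩) (hlast : l (Fin.last m) = ⟨n - 1, Nat.sub_lt hn one_pos⟩)
    (hcirc : ∀ k : Fin n, χ k = true ↔ ∃ i, l i = k)
    (π σ : Finset (Finset (Fin n)))
    (hπ : INCOn Finset.univ χ π) (hσ : INCOn Finset.univ χ σ) (hle : Refines σ π)
    (μ : Finset (Finset (Fin n)) → Finset (Finset (Fin n)) → ℂ)
    (hμ : IsMobiusOn (INCset Finset.univ χ) Refines μ)
    (μNC : Finset (Fin n) → Finset (Finset (Fin n)) → Finset (Finset (Fin n)) → ℂ)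
    (hμNC : ∀ A : Finset (Fin n), IsMobiusOn (NCset A) Refines (μNC A)) :
    μ σ π = ∏ V ∈ π, ∏ i : Fin m,
      μNC (V ∩ Finset.Icc (l i.castSucc) (l i.succ))
        (restrictPart σ (V ∩ Finset.Icc (l i.castSucc) (l i.succ)))
        (if (V ∩ Finset.Icc (l i.castSucc) (l i.succ)).Nonempty
          then {V ∩ Finset.Icc (l i.castSucc) (l i.succ)}
          else (∅ : Finset (Finset (Fin n)))) := by
  have huniv : Icc (l 0) (l (Fin.last m)) = univ := by
    ext x
    simp only [mem_Icc, mem_univ, iff_true, h0, hlast, Fin.le_def]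
    omega
  have hF := isLeftMobiusOn_INCset_Icc hμNC m l hmono (fun i => (hcirc _).2 ⟨i, rfl⟩)
    (eq_false_of_lt_of_lt_succ hmono hcirc)
  rw [huniv] at hF
  rw [← hF.eq_of_isMobiusOn hμ (fun a _ => Refines.refl a) (fun _ _ _ h₁ h₂ => h₁.trans h₂)
    (mem_INCset.2 hσ) (mem_INCset.2 hπ) hle, prod_comm]
  refine prod_congr rfl fun i _ => ?_
  set I := Icc (l i.castSucc) (l i.succ)
  have hIπ := (hπ.restrict (subset_univ I)).ncOn
  rw [mobiusNC_eq_prod_blocks hμNC (hσ.restrict (subset_univ I)).ncOn hIπ (hle.restrict I)]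
  calc _ = ∏ W ∈ restrictPart π I, μNC W (restrictPart σ W) (if W.Nonempty then {W} else ∅) :=
        prod_congr rfl fun W hW => by
          rw [restrictPart_restrictPart (hIπ.1.subset hW), if_pos (hIπ.1.nonempty hW)]
    _ = _ := hπ.1.prod_restrictPart _ (by simp [restrictPart_empty, mobiusNC_empty hμNC]) I
end

section
/- (Boolean independence from projections.) Let (X_i, X_i°, ξ_i), i ∈ I, be vector spaces with specified vectors, let (X_⊎, X_⊎°, ξ) be their Boolean product with X_⊎ = ℂξ ⊕ (⊕_{i∈I} X_i°), let P_{⊎,i} be the projection of X_⊎ onto ℂξ ⊕ X_i° vanishing on ⊕_{j≠i} X_j°, and define α_i(T) = P_{⊎,i} T P_{⊎,i} for T ∈ L(X_i) (identifying ℂξ ⊕ X_i° with X_i). Then for any x_1,...,x_n with x_k ∈ α_{i_k}(L(X_{i_k})) and i_1 ≠ i_2, i_2 ≠ i_3, ..., i_{n-1} ≠ i_n, one has φ_ξ(x_1 x_2 ··· x_n) = φ_ξ(x_1) φ_ξ(x_2) ··· φ_ξ(x_n). -/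
/-!
Every vector `v` splits as `φ v • ξ + m` with `m ∈ ⊕ⱼ Nⱼ`, and `Pᵢ` keeps exactly the part
`φ v • ξ + mᵢ`; hence `x ξ ∈ φ (x ξ) • ξ + Nᵢ` for `x = Pᵢ T Pᵢ`, while `x` kills every `Nⱼ`, `j ≠ i`.
Applying `x_n, …, x_1` to `ξ` in turn, each operator meets a vector of the form `c • ξ + m` with
`m` in the summand of the previous, different, index; it kills `m` and multiplies `c` by `φ (x_k ξ)`.
-/

section BooleanProduct

variable {R X ι : Type*} [CommRing R] [AddCommGroup X] [Module R X] {ξ : X}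

theorem apply_eq_smul_of_sub_smul_mem_ker {T : Module.End R X} {w : X} {c : R}
    (hw : w - c • ξ ∈ LinearMap.ker T) : T w = c • T ξ := by
  rwa [LinearMap.mem_ker, map_sub, map_smul, sub_eq_zero] at hw

theorem eq_of_sub_smul_mem {φ : X →ₗ[R] R} {K : Submodule R X} (hφξ : φ ξ = 1)
    (hφK : ∀ m ∈ K, φ m = 0) {w : X} {c : R} (hw : w - c • ξ ∈ K) : φ w = c := by
  simpa [hφξ, sub_eq_zero] using hφK _ hw

theorem ofFn_prod_apply_sub_smul_mem (N : ι → Submodule R X) :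
    ∀ {n : ℕ} (x : Fin (n + 1) → Module.End R X) (idx : Fin (n + 1) → ι) (a : Fin (n + 1) → R),
      (∀ k, x k ξ - a k • ξ ∈ N (idx k)) → (∀ k, ∀ j ≠ idx k, N j ≤ LinearMap.ker (x k)) →
      (∀ k : Fin n, idx k.castSucc ≠ idx k.succ) →
      (List.ofFn x).prod ξ - (∏ k, a k) • ξ ∈ N (idx 0)
  | 0, x, idx, a, hxξ, _, _ => by simpa using hxξ 0
  | n + 1, x, idx, a, hxξ, hker, hadj => by
    have htail := ofFn_prod_apply_sub_smul_mem N (fun k => x k.succ) (fun k => idx k.succ)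
      (fun k => a k.succ) (fun k => hxξ k.succ) (fun k => hker k.succ)
      (fun k => hadj k.succ)
    have hhead := apply_eq_smul_of_sub_smul_mem_ker (hker 0 _ (by simpa using (hadj 0).symm) htail)
    rw [List.ofFn_succ, List.prod_cons, Module.End.mul_apply, hhead, Fin.prod_univ_succ a,
      mul_comm, mul_smul, ← smul_sub]
    exact (N _).smul_mem _ (hxξ 0)

theorem proj_apply_sub_smul_mem {N : ι → Submodule R X} {φ : X →ₗ[R] R}
    (hspan : Submodule.span R {ξ} ⊔ ⨆ i, N i = ⊤) (hφξ : φ ξ = 1) (hφN : ∀ i, ∀ m ∈ N i, φ m = 0)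
    {P : Module.End R X} {i : ι} (hPξ : P ξ = ξ) (hPfix : ∀ m ∈ N i, P m = m)
    (hPkill : ∀ j ≠ i, ∀ m ∈ N j, P m = 0) (v : X) : P v - φ v • ξ ∈ N i := by
  suffices ⊤ ≤ (N i).comap (P - φ.smulRight ξ) from this Submodule.mem_top
  rw [← hspan, sup_le_iff, Submodule.span_singleton_le_iff_mem, iSup_le_iff]
  refine ⟨by simp [hPξ, hφξ], fun j m hm => ?_⟩
  by_cases hji : j = i
  · subst hji
    simpa [hPfix m hm, hφN j m hm] using hm
  · simp [hPkill j hji m hm, hφN j m hm]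

end BooleanProduct

/-- Boolean independence from projections: in the Boolean product
X = ℂξ ⊕ (⊕ᵢ Nᵢ), with φ the functional determined by φ(ξ) = 1 and φ|_{Nᵢ} = 0,
Pᵢ the projection onto ℂξ ⊕ Nᵢ vanishing on the other summands, and operators
x_k = P_{i_k} T_k P_{i_k} with consecutive indices distinct, one has
φ(x₁ ⋯ x_n ξ) = φ(x₁ ξ) ⋯ φ(x_n ξ). -/
theorem boolean_independence_of_projections {I : Type*} [DecidableEq I]
    {X : Type*} [AddCommGroup X] [Module ℂ X]
    (ξ : X) (N : I → Submodule ℂ X) (φ : X →ₗ[ℂ] ℂ)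
    (hφξ : φ ξ = 1) (hφN : ∀ i, ∀ x ∈ N i, φ x = 0)
    (hinternal : DirectSum.IsInternal
      (fun o : Option I => o.elim (Submodule.span ℂ {ξ}) N))
    (P : I → Module.End ℂ X)
    (hPξ : ∀ i, P i ξ = ξ)
    (hPfix : ∀ i, ∀ x ∈ N i, P i x = x)
    (hPkill : ∀ i j, i ≠ j → ∀ x ∈ N j, P i x = 0)
    {n : ℕ} (x : Fin n → Module.End ℂ X) (idx : Fin n → I)
    (hx : ∀ k, ∃ T : Module.End ℂ X, x k = P (idx k) * T * P (idx k))
    (hadj : ∀ (k : Fin n) (h : k.val + 1 < n), idx k ≠ idx ⟨k.val + 1, h⟩) :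
    φ ((List.ofFn x).prod ξ) = ∏ k, φ (x k ξ) := by
  have hspan : Submodule.span ℂ {ξ} ⊔ ⨆ i, N i = ⊤ := by
    simpa [iSup_option_elim] using hinternal.submodule_iSup_eq_top
  have hproj (i : I) (v : X) : P i v - φ (P i v) • ξ ∈ N i := by
    have h := proj_apply_sub_smul_mem hspan hφξ hφN (hPξ i) (hPfix i)
      (fun j hj => hPkill i j (Ne.symm hj)) v
    rwa [← eq_of_sub_smul_mem hφξ (hφN i) h] at h
  cases n with
  | zero => simpa using hφξ
  | succ n =>
    choose T hT using hx
    refine eq_of_sub_smul_mem hφξ (hφN (idx 0))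
      (ofFn_prod_apply_sub_smul_mem N x idx _ (fun k => ?_) (fun k j hj m hm => ?_)
        (fun k => hadj k.castSucc (by simp)))
    · rw [hT k, mul_assoc, Module.End.mul_apply]
      exact hproj _ _
    · simp [hT k, hPkill _ _ (Ne.symm hj) m hm]
end
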